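/- arXiv:2103.01659 — 6 statements merged into one kernel-verified Lean document; each statement's English description precedes it below -/
import Mathlib

section
/- Let (X,d) be a metric space. A sequence (x_n) in X is Bourbaki quasi-Cauchy in X if and only if (x_n) is a subsequence of some quasi-Cauchy sequence in X. -/
open Filter Metric Set

/-- A sequence is quasi-Cauchy if distances of consecutive terms tend to zero. -/
def QuasiCauchy {α : Type*} [MetricSpace α] (u : ℕ → α) : Prop :=
  ∀ ε > (0:ℝ), ∃ n₀ : ℕ, ∀ n ≥ n₀, dist (u (n+1)) (u n) < ε

/-- `y` lies in the ε-chainable component of `x`: they are joined by an ε-chain. -/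
def ChainConn {α : Type*} [MetricSpace α] (ε : ℝ) (x y : α) : Prop :=
  ∃ (n : ℕ) (p : ℕ → α), p 0 = x ∧ p n = y ∧ ∀ i < n, dist (p i) (p (i+1)) < ε

/-- A sequence is Bourbaki quasi-Cauchy if for each ε > 0 it is eventually in one
ε-chainable component. -/
def BourbakiQuasiCauchy {α : Type*} [MetricSpace α] (u : ℕ → α) : Prop :=
  ∀ ε > (0:ℝ), ∃ (p : α) (n₀ : ℕ), ∀ n ≥ n₀, ChainConn ε p (u n)

lemma chainConn_symm {α : Type*} [MetricSpace α] {ε : ℝ} {x y : α}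
    (h : ChainConn ε x y) : ChainConn ε y x := by
  obtain ⟨n, p, hp0, hpn, hps⟩ := h
  refine ⟨n, fun i => p (n - i), by simpa using hpn, by simpa using hp0, ?_⟩
  intro i hi
  dsimp only
  have h1 : n - i = (n - (i+1)) + 1 := by omega
  rw [h1, dist_comm]
  exact hps _ (by omega)

lemma chainConn_trans {α : Type*} [MetricSpace α] {ε : ℝ} {x y z : α}
    (h1 : ChainConn ε x y) (h2 : ChainConn ε y z) : ChainConn ε x z := by
  obtain ⟨n, p, hp0, hpn, hps⟩ := h1
  obtain ⟨m, r, hr0, hrm, hrs⟩ := h2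
  refine ⟨n + m, fun i => if i ≤ n then p i else r (i - n), by simp [hp0], ?_, ?_⟩
  · dsimp only
    rcases Nat.eq_zero_or_pos m with hm | hm
    · subst hm
      simp only [Nat.add_zero, le_refl, if_pos]
      rw [hpn, ← hr0]; exact hrm
    · rw [if_neg (by omega), Nat.add_sub_cancel_left]; exact hrm
  · intro i hi
    dsimp only
    by_cases h : i + 1 ≤ n
    · rw [if_pos (by omega), if_pos h]
      exact hps i (by omega)
    · by_cases h' : i ≤ n
      · simp only [if_pos h', if_neg h]
        have hin : i = n := by omega
        subst hin
        rw [hpn, ← hr0, show i + 1 - i = 1 by omega]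
        exact hrs 0 (by omega)
      · rw [if_neg h', if_neg h, show i + 1 - n = (i - n) + 1 by omega]
        exact hrs (i - n) (by omega)

lemma chainConn_pad {α : Type*} [MetricSpace α] {ε : ℝ} {x y : α}
    (hε : 0 < ε) (h : ChainConn ε x y) :
    ∃ (L : ℕ) (q : ℕ → α), 0 < L ∧ q 0 = x ∧ q L = y ∧ ∀ i < L, dist (q i) (q (i+1)) < ε := by
  obtain ⟨n, p, hp0, hpn, hps⟩ := h
  refine ⟨n + 1, fun i => if i = 0 then x else p (i - 1), Nat.succ_pos n, if_pos rfl, ?_, ?_⟩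
  · dsimp only
    rw [if_neg (by omega)]
    simpa using hpn
  · intro i hi
    dsimp only
    rcases Nat.eq_zero_or_pos i with h0 | h0
    · subst h0
      simp only [if_pos rfl, if_neg (one_ne_zero)]
      simpa [hp0] using hε
    · rw [if_neg (by omega), if_neg (by omega),
        show i + 1 - 1 = (i - 1) + 1 by omega]
      exact hps (i - 1) (by omega)

/-- Partial sums of a sequence of lengths. -/
def partialSum (L : ℕ → ℕ) : ℕ → ℕ
  | 0 => 0
  | n+1 => partialSum L n + L n

theorem stmt0 {X : Type*} [MetricSpace X] (u : ℕ → X) :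
    BourbakiQuasiCauchy u ↔
      ∃ (z : ℕ → X) (φ : ℕ → ℕ), QuasiCauchy z ∧ StrictMono φ ∧ u = z ∘ φ := by
  constructor
  · intro h
    have key : ∀ ε > (0:ℝ), ∃ n₀ : ℕ, ∀ n ≥ n₀, ChainConn ε (u n) (u (n+1)) := by
      intro ε hε
      obtain ⟨p, n₀, hp⟩ := h ε hε
      exact ⟨n₀, fun n hn =>
        chainConn_trans (chainConn_symm (hp n hn)) (hp (n+1) (by omega))⟩
    choose m hm using fun k : ℕ => key (1/(k+1)) (by positivity)
    set M : ℕ → ℕ := fun k => (Finset.range (k+1)).sup m with hM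
    have hmM : ∀ k, m k ≤ M k := fun k => Finset.le_sup (Finset.self_mem_range_succ k)
    set K : ℕ → ℕ := fun n => Nat.findGreatest (fun k => 0 < k ∧ M k ≤ n) n with hK
    set δ : ℕ → ℝ := fun n =>
      if 0 < K n then 1/(K n + 1) else dist (u n) (u (n+1)) + 1 with hδ
    have hδpos : ∀ n, 0 < δ n := by
      intro n
      rw [hδ]; dsimp only; split
      · positivity
      · have := dist_nonneg (x := u n) (y := u (n+1)); linarith
    have hcc : ∀ n, ChainConn (δ n) (u n) (u (n+1)) := by
      intro n
      rw [hδ]; dsimp only; split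
      · rename_i hpos
        have hspec : (fun k => 0 < k ∧ M k ≤ n) (K n) :=
          (Nat.findGreatest_eq_iff.1 rfl).2.1 (show K n ≠ 0 by omega)
        exact hm (K n) n (le_trans (hmM (K n)) hspec.2)
      · refine ⟨1, fun i => if i = 0 then u n else u (n+1), if_pos rfl,
          if_neg one_ne_zero, ?_⟩
        intro i hi
        have h0 : i = 0 := by omega
        subst h0
        simp only [if_pos rfl, if_neg one_ne_zero]
        exact lt_add_one _
    have hchain : ∀ n, ∃ (L : ℕ) (q : ℕ → X), 0 < L ∧ q 0 = u n ∧ q L = u (n+1) ∧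
        ∀ i < L, dist (q i) (q (i+1)) < δ n := fun n => chainConn_pad (hδpos n) (hcc n)
    choose L q hLpos hq0 hqL hqd using hchain
    set T : ℕ → ℕ := partialSum L with hT
    have hTsucc : ∀ n, T (n+1) = T n + L n := fun n => rfl
    have hTmono : StrictMono T := strictMono_nat_of_lt_succ (fun n => by
      have := hLpos n; rw [hTsucc]; omega)
    have hTge : ∀ n, n ≤ T n := fun n => hTmono.le_apply
    have hex : ∀ j : ℕ, ∃ n, j < T (n+1) := fun j => ⟨j, by have := hTge (j+1); omega⟩
    set idx : ℕ → ℕ := fun j => Nat.find (hex j) with hidx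
    have hidx1 : ∀ j, j < T (idx j + 1) := fun j => Nat.find_spec (hex j)
    have hidx2 : ∀ j, T (idx j) ≤ j := by
      intro j
      rcases Nat.eq_zero_or_pos (idx j) with h0 | h0
      · rw [h0]; exact Nat.zero_le j
      · have hmin := Nat.find_min (hex j) (m := idx j - 1) (show idx j - 1 < idx j by omega)
        rw [show idx j - 1 + 1 = idx j by omega] at hmin
        omega
    have hidxT : ∀ n, idx (T n) = n := by
      intro n
      rw [hidx]; dsimp only
      rw [Nat.find_eq_iff]
      refine ⟨hTmono (by omega), ?_⟩
      intro k hk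
      have : T (k+1) ≤ T n := hTmono.monotone (by omega)
      omega
    set z : ℕ → X := fun j => q (idx j) (j - T (idx j)) with hz
    have hzT : ∀ n, z (T n) = u n := by
      intro n
      rw [hz]; dsimp only
      rw [hidxT n, Nat.sub_self, hq0]
    refine ⟨z, T, ?_, hTmono, ?_⟩
    · intro ε hε
      obtain ⟨k, hk⟩ := exists_nat_one_div_lt hε
      refine ⟨T (max (M (k+1)) (k+1)), ?_⟩
      intro j hj
      set n := idx j with hn
      have h1 : T n ≤ j := hidx2 j
      have h2 : j < T (n+1) := hidx1 j
      have hnn₀ : max (M (k+1)) (k+1) ≤ n := by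
        by_contra hc
        push_neg at hc
        have : T (n+1) ≤ T (max (M (k+1)) (k+1)) := hTmono.monotone (by omega)
        omega
      have hzj : z j = q n (j - T n) := rfl
      have hzj1 : z (j+1) = q n ((j - T n) + 1) := by
        rcases Nat.lt_or_ge (j+1) (T (n+1)) with hlt | hge
        · have hidxj1 : idx (j+1) = n := by
            rw [hidx]; dsimp only; rw [Nat.find_eq_iff]
            refine ⟨hlt, fun l hl => ?_⟩
            have : T (l+1) ≤ T n := hTmono.monotone (by omega)
            omega
          rw [hz]; dsimp only
          rw [hidxj1, show j + 1 - T n = (j - T n) + 1 by omega]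
        · have hj1 : j + 1 = T (n+1) := by omega
          rw [hj1, hzT, show j - T n + 1 = L n by have := hTsucc n; omega, hqL]
      rw [hzj, hzj1, dist_comm]
      have hstep : dist (q n (j - T n)) (q n ((j - T n) + 1)) < δ n :=
        hqd n (j - T n) (by have := hTsucc n; omega)
      have hδn : δ n < ε := by
        have hKn : k + 1 ≤ K n :=
          Nat.le_findGreatest (by omega) ⟨by omega, le_trans (le_max_left _ _) hnn₀⟩
        have h0 : 0 < K n := by omega
        rw [hδ]; dsimp only; rw [if_pos h0]
        have hle : (1:ℝ)/(K n + 1) ≤ 1/(k + 1) := by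
          apply one_div_le_one_div_of_le
          · positivity
          · have : (k:ℝ) + 1 ≤ (K n : ℝ) := by exact_mod_cast (by omega : k + 1 ≤ K n)
            linarith
        linarith
      linarith
    · funext n
      simp only [Function.comp_apply]
      rw [hzT n]
  · rintro ⟨z, φ, hz, hφ, rfl⟩
    intro ε hε
    obtain ⟨n₀, hn₀⟩ := hz ε hε
    refine ⟨z n₀, n₀, ?_⟩
    intro n hn
    have hφn : n₀ ≤ φ n := le_trans hn hφ.le_apply
    refine ⟨φ n - n₀, fun i => z (n₀ + i), by simp, ?_, ?_⟩
    · show z (n₀ + (φ n - n₀)) = (z ∘ φ) n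
      rw [show n₀ + (φ n - n₀) = φ n by omega]
      rfl
    · intro i hi
      rw [dist_comm]
      exact hn₀ (n₀ + i) (by omega)
end

section
/- Let (X,d) and (Y,ρ) be metric spaces and f : X → Y a ward continuous function. Then for every subset A of X that is Bourbaki quasi-precompact in X, the image f(A) is Bourbaki quasi-precompact in f(X). -/
open Filter Metric Set

/-- A function is ward continuous if it preserves quasi-Cauchy sequences. -/
def WardContinuous {α β : Type*} [MetricSpace α] [MetricSpace β] (f : α → β) : Prop :=
  ∀ u : ℕ → α, QuasiCauchy u → QuasiCauchy (f ∘ u)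

/-- `y` lies in the ε-chainable component of `x` computed within `B`:
they are joined by an ε-chain all of whose points belong to `B`. -/
def ChainConnIn {α : Type*} [MetricSpace α] (B : Set α) (ε : ℝ) (x y : α) : Prop :=
  ∃ (n : ℕ) (p : ℕ → α), p 0 = x ∧ p n = y ∧ (∀ i ≤ n, p i ∈ B) ∧
    ∀ i < n, dist (p i) (p (i+1)) < ε

/-- `A` is Bourbaki quasi-precompact in the (sub)space `B`: for every ε > 0 it is
covered by finitely many ε-chainable components of points of `B`, the chains lying in `B`. -/
def BourbakiQuasiPrecompactRel {α : Type*} [MetricSpace α] (A B : Set α) : Prop :=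
  ∀ ε > (0:ℝ), ∃ s : Finset α, ↑s ⊆ B ∧ ∀ a ∈ A, ∃ p ∈ s, ChainConnIn B ε p a


theorem ChainConnIn.symm' {α : Type*} [MetricSpace α] {B : Set α} {ε : ℝ} {x y : α}
    (h : ChainConnIn B ε x y) : ChainConnIn B ε y x := by
  obtain ⟨n, p, h0, hn, hmem, hstep⟩ := h
  refine ⟨n, fun i => p (n - i), by simp [hn], by simp [h0], fun i hi => hmem _ (by omega),
    fun i hi => ?_⟩
  show dist (p (n - i)) (p (n - (i+1))) < ε
  have h1 : n - (i+1) + 1 = n - i := by omega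
  rw [← h1, dist_comm]
  exact hstep (n - (i+1)) (by omega)

theorem ChainConnIn.trans' {α : Type*} [MetricSpace α] {B : Set α} {ε : ℝ} {x y z : α}
    (h1 : ChainConnIn B ε x y) (h2 : ChainConnIn B ε y z) : ChainConnIn B ε x z := by
  obtain ⟨n, p, hp0, hpn, hpm, hps⟩ := h1
  obtain ⟨m, q, hq0, hqm, hqmm, hqs⟩ := h2
  refine ⟨n + m, fun i => if i ≤ n then p i else q (i - n), by simp [hp0], ?_, ?_, ?_⟩
  · by_cases h : m = 0
    · subst h
      simp only [Nat.add_zero, le_refl, if_pos]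
      rw [hpn, ← hq0, hqm]
    · have hh : ¬ (n + m ≤ n) := by omega
      simp only [if_neg hh]
      rw [show n + m - n = m by omega, hqm]
  · intro i hi
    by_cases h : i ≤ n
    · simp only [if_pos h]; exact hpm i h
    · simp only [if_neg h]; exact hqmm _ (by omega)
  · intro i hi
    rcases lt_trichotomy i n with h | h | h
    · have ha : i ≤ n := le_of_lt h
      have hb : i + 1 ≤ n := h
      simp only [if_pos ha, if_pos hb]
      exact hps i h
    · subst h
      have hm : 0 < m := by omega
      have hb : ¬ (i + 1 ≤ i) := by omega
      simp only [if_pos le_rfl, if_neg hb]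
      rw [show i + 1 - i = 1 by omega, hpn, ← hq0]
      exact hqs 0 hm
    · have ha : ¬ i ≤ n := by omega
      have hb : ¬ i + 1 ≤ n := by omega
      simp only [if_neg ha, if_neg hb]
      rw [show i + 1 - n = (i - n) + 1 by omega]
      exact hqs (i - n) (by omega)

theorem ChainConnIn.exists_pos {α : Type*} [MetricSpace α] {B : Set α} {ε : ℝ} {x y : α}
    (h : ChainConnIn B ε x y) (hε : 0 < ε) :
    ∃ L, 1 ≤ L ∧ ∃ p : ℕ → α, p 0 = x ∧ p L = y ∧ ∀ j < L, dist (p j) (p (j+1)) < ε := by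
  obtain ⟨n, p, h0, hn, -, hs⟩ := h
  refine ⟨n + 1, by omega, fun i => p (min i n), by simp [h0], by simp [hn], fun j hj => ?_⟩
  show dist (p (min j n)) (p (min (j+1) n)) < ε
  rcases lt_or_ge j n with h | h
  · rw [show min j n = j by omega, show min (j+1) n = j+1 by omega]
    exact hs j h
  · rw [show min j n = n by omega, show min (j+1) n = n by omega]
    simpa using hε

theorem exists_seq_rec {α : Type*} (P : ℕ → α → Prop) (R : ℕ → α → α → Prop)
    (h0 : ∃ x, P 0 x) (hs : ∀ n x, P n x → ∃ y, P (n+1) y ∧ R n x y) :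
    ∃ g : ℕ → α, (∀ n, P n (g n)) ∧ ∀ n, R n (g n) (g (n+1)) := by
  choose x0 hx0 using h0
  choose F hF hR using hs
  let g : ∀ n, {x : α // P n x} := fun n =>
    Nat.rec ⟨x0, hx0⟩ (fun n ih => ⟨F n ih.1 ih.2, hF n ih.1 ih.2⟩) n
  exact ⟨fun n => (g n).1, fun n => (g n).2, fun n => hR n (g n).1 (g n).2⟩

theorem stmt2 {X Y : Type*} [MetricSpace X] [MetricSpace Y] (f : X → Y)
    (hf : WardContinuous f) (A : Set X)
    (hA : BourbakiQuasiPrecompactRel A (Set.univ : Set X)) :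
    BourbakiQuasiPrecompactRel (f '' A) (Set.range f) := by
  classical
  by_contra hcon
  unfold BourbakiQuasiPrecompactRel at hcon
  push_neg at hcon
  obtain ⟨ε, hε, H⟩ := hcon
  -- Step 1: a sequence in A whose images are pairwise not ε-chain connected in range f
  have fresh_ex : ∀ t : Finset X, ∃ x, x ∈ A ∧
      ∀ y ∈ t, ¬ ChainConnIn (Set.range f) ε (f y) (f x) := by
    intro t
    obtain ⟨b, hbA, hb⟩ := H (t.image f) (by
      intro y hy
      simp only [Finset.coe_image, Set.mem_image, Finset.mem_coe] at hy
      obtain ⟨x, -, rfl⟩ := hy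
      exact Set.mem_range_self x)
    obtain ⟨x, hxA, rfl⟩ := hbA
    exact ⟨x, hxA, fun y hy => hb (f y) (Finset.mem_image_of_mem f hy)⟩
  choose fresh hfreshA hfresh using fresh_ex
  obtain ⟨l, hl0, hls⟩ : ∃ l : ℕ → Finset X, l 0 = ∅ ∧
      ∀ n, l (n+1) = insert (fresh (l n)) (l n) :=
    ⟨fun n => Nat.rec ∅ (fun _ t => insert (fresh t) t) n, rfl, fun n => rfl⟩
  obtain ⟨a, hadef⟩ : ∃ a : ℕ → X, ∀ n, a n = fresh (l n) := ⟨_, fun n => rfl⟩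
  have haA : ∀ n, a n ∈ A := fun n => (hadef n) ▸ hfreshA (l n)
  have hmeml : ∀ m n, m < n → a m ∈ l n := by
    intro m n h
    induction n with
    | zero => omega
    | succ n ih =>
      rw [hls]
      rcases Nat.lt_succ_iff_lt_or_eq.mp h with h | h
      · exact Finset.mem_insert_of_mem (ih h)
      · subst h; rw [hadef]; exact Finset.mem_insert_self _ _
  have hsep : ∀ m n, m < n → ¬ ChainConnIn (Set.range f) ε (f (a m)) (f (a n)) := by
    intro m n h
    rw [hadef n]
    exact hfresh (l n) (a m) (hmeml m n h)
  -- Step 2: pigeonhole refinement lemma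
  have refine_claim : ∀ δ > (0:ℝ), ∀ S : Set ℕ, S.Infinite →
      ∃ S' : Set ℕ, S' ⊆ S ∧ S'.Infinite ∧
        ∀ m ∈ S', ∀ n ∈ S', ChainConnIn (Set.univ : Set X) δ (a m) (a n) := by
    intro δ hδ S hS
    obtain ⟨s, -, hcov⟩ := hA δ hδ
    have hmem : ∀ n : ℕ, ∃ c ∈ s, ChainConnIn (Set.univ : Set X) δ c (a n) :=
      fun n => hcov (a n) (haA n)
    choose c hcs hcchain using hmem
    have hpig : ∃ c₀ ∈ s, {n | n ∈ S ∧ c n = c₀}.Infinite := by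
      by_contra hc
      push_neg at hc
      refine hS (Set.Finite.subset (Set.Finite.biUnion s.finite_toSet
        (fun c₀ hc₀ => (hc c₀ hc₀))) ?_)
      intro n hn
      exact Set.mem_biUnion (hcs n) ⟨hn, rfl⟩
    obtain ⟨c₀, -, hinf⟩ := hpig
    refine ⟨{n | n ∈ S ∧ c n = c₀}, fun n hn => hn.1, hinf, ?_⟩
    rintro m ⟨-, hm⟩ n ⟨-, hn⟩
    have h1 := hcchain m
    have h2 := hcchain n
    rw [hm] at h1
    rw [hn] at h2
    exact h1.symm'.trans' h2
  -- Step 3: nested infinite sets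
  obtain ⟨S, hSP, hSsub⟩ := exists_seq_rec
    (fun k (S : Set ℕ) => S.Infinite ∧ ∀ m ∈ S, ∀ n ∈ S,
      ChainConnIn (Set.univ : Set X) (1/((k:ℝ)+1)) (a m) (a n))
    (fun _ (S S' : Set ℕ) => S' ⊆ S)
    (by
      obtain ⟨S', hsub, hinf, hch⟩ := refine_claim (1/((0:ℕ):ℝ)+1)
        (by norm_num) Set.univ Set.infinite_univ
      exact ⟨S', hinf, fun m hm n hn => by
        have := hch m hm n hn
        norm_num at this ⊢
        exact this⟩)
    (by
      intro k S hS
      obtain ⟨S', hsub, hinf, hch⟩ := refine_claim (1/(((k+1:ℕ):ℝ)+1))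
        (by positivity) S hS.1
      exact ⟨S', ⟨hinf, hch⟩, hsub⟩)
  -- Step 4: increasing index selection
  obtain ⟨i, hiS, hilt⟩ := exists_seq_rec (fun k (m : ℕ) => m ∈ S k) (fun _ (m m' : ℕ) => m < m')
    ((hSP 0).1.nonempty)
    (fun k m _ => by
      obtain ⟨m', hm', hlt⟩ := (hSP (k+1)).1.exists_gt m
      exact ⟨m', hm', hlt⟩)
  -- Step 5: chains between consecutive selected points
  have hchain' : ∀ k, ∃ L, 1 ≤ L ∧ ∃ p : ℕ → X, p 0 = a (i k) ∧ p L = a (i (k+1)) ∧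
      ∀ j < L, dist (p j) (p (j+1)) < 1/((k:ℝ)+1) := by
    intro k
    exact ChainConnIn.exists_pos
      ((hSP k).2 (i k) (hiS k) (i (k+1)) (hSsub k (hiS (k+1)))) (by positivity)
  choose L hL p hp0 hpL hpstep using hchain'
  -- Step 6: partial sums and concatenated sequence
  obtain ⟨T, hT0, hTs⟩ : ∃ T : ℕ → ℕ, T 0 = 0 ∧ ∀ k, T (k+1) = T k + L k :=
    ⟨fun k => Nat.rec 0 (fun k t => t + L k) k, rfl, fun k => rfl⟩
  have hTmono : StrictMono T := strictMono_nat_of_lt_succ fun k => by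
    rw [hTs]; have := hL k; omega
  have hTle : ∀ k, k ≤ T k := fun k => hTmono.le_apply
  obtain ⟨K, hKdef⟩ : ∃ K : ℕ → ℕ, ∀ n, K n = Nat.findGreatest (fun k => T k ≤ n) n :=
    ⟨_, fun n => rfl⟩
  have hKle : ∀ n, T (K n) ≤ n := by
    intro n
    rw [hKdef]
    exact Nat.findGreatest_spec (P := fun k => T k ≤ n) (Nat.zero_le n)
      (show T 0 ≤ n by rw [hT0]; omega)
  have hKge : ∀ k n, T k ≤ n → k ≤ K n := by
    intro k n h
    rw [hKdef]
    exact Nat.le_findGreatest (le_trans (hTle k) h) h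
  have hKlt : ∀ n, n < T (K n + 1) := by
    intro n
    by_contra h
    push_neg at h
    have h2 : K n + 1 ≤ K n := hKge (K n + 1) n h
    omega
  have hKT : ∀ k, K (T k) = k := by
    intro k
    have h1 : K (T k) ≤ k := hTmono.le_iff_le.mp (hKle (T k))
    have h2 : k < K (T k) + 1 := hTmono.lt_iff_lt.mp (hKlt (T k))
    omega
  obtain ⟨u, hu⟩ : ∃ u : ℕ → X, ∀ n, u n = p (K n) (n - T (K n)) := ⟨_, fun n => rfl⟩
  have hKsucc : ∀ n, u (n+1) = p (K n) (n + 1 - T (K n)) := by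
    intro n
    rw [hu]
    rcases Nat.lt_or_ge (n+1) (T (K n + 1)) with h | h'
    · have hk1 : K (n+1) = K n := by
        have hub : K (n+1) ≤ K n := by
          by_contra hc
          push_neg at hc
          have h2 : T (K n + 1) ≤ T (K (n+1)) := hTmono.monotone hc
          have h3 := hKle (n+1)
          omega
        have hlb : K n ≤ K (n+1) := hKge (K n) (n+1) (Nat.le_succ_of_le (hKle n))
        omega
      rw [hk1]
    · have h : n + 1 = T (K n + 1) := by have := hKlt n; omega
      have hk1 : K (n+1) = K n + 1 := by rw [h, hKT]
      rw [hk1]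
      rw [show n + 1 - T (K n + 1) = 0 by omega, hp0]
      rw [show n + 1 - T (K n) = L (K n) by rw [h, hTs]; omega, hpL]
  have hstep : ∀ n, dist (u (n+1)) (u n) < 1/((K n : ℝ)+1) := by
    intro n
    rw [hKsucc n, hu n]
    have h1 : T (K n) ≤ n := hKle n
    have h2 : n < T (K n + 1) := hKlt n
    have h3 : n - T (K n) < L (K n) := by rw [hTs] at h2; omega
    rw [show n + 1 - T (K n) = (n - T (K n)) + 1 by omega, dist_comm]
    exact hpstep (K n) _ h3
  have huQC : QuasiCauchy u := by
    intro ε' hε'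
    obtain ⟨k₀, hk₀⟩ := exists_nat_one_div_lt hε'
    refine ⟨T k₀, fun n hn => ?_⟩
    have h1 : k₀ ≤ K n := hKge k₀ n hn
    calc dist (u (n+1)) (u n) < 1/((K n : ℝ)+1) := hstep n
      _ ≤ 1/((k₀:ℝ)+1) := by
          apply one_div_le_one_div_of_le (by positivity)
          have : (k₀:ℝ) ≤ (K n : ℝ) := by exact_mod_cast h1
          linarith
      _ < ε' := hk₀
  -- Step 7: contradiction
  obtain ⟨n₀, hn₀⟩ := hf u huQC ε hε
  refine hsep (i n₀) (i (n₀+1)) (hilt n₀) ?_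
  refine ⟨L n₀, fun j => f (u (T n₀ + j)), ?_, ?_, fun j _ => ⟨_, rfl⟩, ?_⟩
  · show f (u (T n₀ + 0)) = f (a (i n₀))
    rw [Nat.add_zero, hu, hKT, Nat.sub_self, hp0]
  · show f (u (T n₀ + L n₀)) = f (a (i (n₀+1)))
    rw [← hTs, hu, hKT, Nat.sub_self, hp0]
  · intro j hj
    show dist (f (u (T n₀ + j))) (f (u (T n₀ + (j+1)))) < ε
    rw [show T n₀ + (j+1) = (T n₀ + j) + 1 by omega, dist_comm]
    exact hn₀ (T n₀ + j) (le_trans (hTle n₀) (Nat.le_add_right _ _))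
end

section
/- A metric space (X,d) is compact if and only if it is both Bourbaki quasi-precompact and Bourbaki quasi-complete. -/
open Filter Metric Set

/-- A metric space is Bourbaki quasi-precompact: for every ε > 0 it is covered by
finitely many ε-chainable components. -/
def BourbakiQuasiPrecompact (α : Type*) [MetricSpace α] : Prop :=
  ∀ ε > (0:ℝ), ∃ s : Finset α, ∀ x : α, ∃ p ∈ s, ChainConn ε p x

/-- A metric space is Bourbaki quasi-complete: every Bourbaki quasi-Cauchy sequence
has a cluster point. -/
def BourbakiQuasiComplete (α : Type*) [MetricSpace α] : Prop :=
  ∀ u : ℕ → α, BourbakiQuasiCauchy u → ∃ c : α, MapClusterPt c atTop u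

lemma chainConn_mono {α : Type*} [MetricSpace α] {ε ε' : ℝ} (h : ε ≤ ε') {x y : α}
    (hc : ChainConn ε x y) : ChainConn ε' x y := by
  obtain ⟨n, p, h0, hn, hd⟩ := hc
  exact ⟨n, p, h0, hn, fun i hi => lt_of_lt_of_le (hd i hi) h⟩

lemma pigeon {α : Type*} [MetricSpace α] (u : ℕ → α) {ε : ℝ} (hε : 0 < ε)
    (hpre : BourbakiQuasiPrecompact α) {T : Set ℕ} (hT : T.Infinite) :
    ∃ p : α, {n ∈ T | ChainConn ε p (u n)}.Infinite := by
  obtain ⟨s, hs⟩ := hpre ε hε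
  by_contra h
  push_neg at h
  have : T ⊆ ⋃ p ∈ (s : Set α), {n ∈ T | ChainConn ε p (u n)} := by
    intro n hn
    obtain ⟨p, hp, hc⟩ := hs (u n)
    exact mem_biUnion hp ⟨hn, hc⟩
  exact hT ((Set.Finite.biUnion s.finite_toSet fun p _ =>
    (h p)).subset this)

theorem stmt4 {X : Type*} [MetricSpace X] :
    CompactSpace X ↔ BourbakiQuasiPrecompact X ∧ BourbakiQuasiComplete X := by
  constructor
  · intro hX
    constructor
    · intro ε hε
      obtain ⟨t, hft, hcov⟩ := (Metric.totallyBounded_iff.mp (isCompact_univ (X := X)).totallyBounded) ε hε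
      refine ⟨hft.toFinset, fun x => ?_⟩
      have hx : x ∈ ⋃ y ∈ t, ball y ε := hcov (mem_univ x)
      obtain ⟨y, hy, hxy⟩ := mem_iUnion₂.mp hx
      exact ⟨y, hft.mem_toFinset.mpr hy,
        ⟨1, fun i => if i = 0 then y else x, by simp, by simp, by
          intro i hi
          interval_cases i
          simpa [dist_comm] using hxy⟩⟩
    · intro u _
      obtain ⟨c, _, hc⟩ := isCompact_univ.exists_mapClusterPt (f := atTop) (u := u)
        (le_principal_iff.mpr univ_mem)
      exact ⟨c, hc⟩
  · rintro ⟨hpre, hcomp⟩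
    rw [compactSpace_iff_seqCompactSpace]
    constructor
    intro u _
    suffices h : ∃ c : X, MapClusterPt c atTop u by
      obtain ⟨c, hc⟩ := h
      obtain ⟨ψ, hψ, hten⟩ := TopologicalSpace.FirstCountableTopology.tendsto_subseq hc
      exact ⟨c, mem_univ c, ψ, hψ, hten⟩
    have key : ∀ k : ℕ, ∀ T : Set ℕ, T.Infinite →
        ∃ p : X, {n ∈ T | ChainConn (1 / ((k:ℝ) + 1)) p (u n)}.Infinite := by
      intro k T hT
      exact pigeon u (by positivity) hpre hT
    choose P hP using key
    let f : ℕ → {T : Set ℕ // T.Infinite} := fun k => Nat.rec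
      ⟨{n ∈ Set.univ | ChainConn (1 / ((0:ℕ) + 1 : ℝ))
          (P 0 Set.univ Set.infinite_univ) (u n)}, hP 0 Set.univ Set.infinite_univ⟩
      (fun k fk => ⟨{n ∈ fk.1 | ChainConn (1 / ((k + 1 : ℕ) + 1 : ℝ))
          (P (k+1) fk.1 fk.2) (u n)}, hP (k+1) fk.1 fk.2⟩) k
    let S : ℕ → Set ℕ := fun k => (f k).1
    let q : ℕ → X := fun k => Nat.casesOn k (P 0 Set.univ Set.infinite_univ)
      (fun k' => P (k'+1) (f k').1 (f k').2)
    have hmem : ∀ k n, n ∈ S k → ChainConn (1 / ((k:ℝ) + 1)) (q k) (u n) := by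
      intro k n hn
      cases k with
      | zero => exact hn.2
      | succ k' => exact hn.2
    have hsub : ∀ k, S (k+1) ⊆ S k := fun k n hn => hn.1
    have hanti : ∀ j k, j ≤ k → S k ⊆ S j := by
      intro j k hjk
      induction hjk with
      | refl => exact fun _ h => h
      | step _ ih => exact fun n hn => ih (hsub _ hn)
    obtain ⟨φ, hφmono, hφmem⟩ := extraction_forall_of_frequently
      (P := fun k n => n ∈ S k)
      (fun k => Nat.frequently_atTop_iff_infinite.mpr (f k).2)
    have hqc : BourbakiQuasiCauchy (u ∘ φ) := by
      intro ε hε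
      obtain ⟨k, hk⟩ := exists_nat_one_div_lt hε
      refine ⟨q k, k, fun m hm => ?_⟩
      exact chainConn_mono (le_of_lt hk) (hmem k (φ m) (hanti k m hm (hφmem m)))
    obtain ⟨c, hc⟩ := hcomp (u ∘ φ) hqc
    exact ⟨c, MapClusterPt.of_comp hφmono.tendsto_atTop hc⟩
end

section
/- Let X be a subset of ℝ endowed with the usual metric. Then X is compact if and only if X is Bourbaki quasi-precompact in itself and every quasi-Cauchy sequence in X has a cluster point in X. -/
open Filter Metric Set Topology

/-- quasi-Cauchy from tendsto of consecutive distances -/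
lemma quasiCauchy_of_tendsto {u : ℕ → ℝ}
    (h : Tendsto (fun n => dist (u (n+1)) (u n)) atTop (𝓝 0)) : QuasiCauchy u := by
  intro ε hε
  have := (Metric.tendsto_atTop.1 h) ε hε
  obtain ⟨N, hN⟩ := this
  refine ⟨N, fun n hn => ?_⟩
  have := hN n hn
  rw [Real.dist_eq, sub_zero] at this
  exact lt_of_le_of_lt (le_abs_self _) this

/-- crossing lemma: an ε-chain in X from below t to above t passes within ε of t. -/
lemma chain_cross {X : Set ℝ} {ε t : ℝ} :
    ∀ (n : ℕ) (p : ℕ → ℝ), (∀ i ≤ n, p i ∈ X) → (∀ i < n, dist (p i) (p (i+1)) < ε) →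
      p 0 ≤ t → t < p n → ∃ x ∈ X, dist x t < ε := by
  intro n
  induction n with
  | zero => intro p _ _ h1 h2; exact absurd (lt_of_le_of_lt h1 h2) (lt_irrefl _)
  | succ n ih =>
    intro p hmem hstep h0 hn
    by_cases h : p n ≤ t
    · refine ⟨p (n+1), hmem (n+1) le_rfl, ?_⟩
      have hd := hstep n (Nat.lt_succ_self n)
      rw [Real.dist_eq] at hd ⊢
      rw [abs_lt] at hd
      rw [abs_lt]
      constructor <;> linarith
    · push_neg at h
      exact ih p (fun i hi => hmem i (le_trans hi (Nat.le_succ n)))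
        (fun i hi => hstep i (Nat.lt_succ_of_lt hi)) h0 h

/-- the key boundedness lemma -/
lemma aux_bddAbove (X : Set ℝ) (hB : BourbakiQuasiPrecompactRel X X)
    (hQ : ∀ u : ℕ → ℝ, (∀ n, u n ∈ X) → QuasiCauchy u →
      ∃ c ∈ X, MapClusterPt c atTop u) : BddAbove X := by
  by_contra hA
  have hne : X.Nonempty := by
    rcases X.eq_empty_or_nonempty with h | h
    · exact absurd (h ▸ bddAbove_empty) hA
    · exact h
  -- Step 1: for every δ > 0 there is T such that every t ≥ T is within δ of X
  have step1 : ∀ δ > (0:ℝ), ∃ T : ℝ, ∀ t ≥ T, ∃ x ∈ X, dist x t < δ := by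
    intro δ hδ
    obtain ⟨s, hsX, hcov⟩ := hB δ hδ
    have key : ∃ p ∈ s, ¬ BddAbove {a | a ∈ X ∧ ChainConnIn X δ p a} := by
      by_contra h
      push_neg at h
      apply hA
      have hsub : X ⊆ ⋃ p ∈ (s : Set ℝ), {a | a ∈ X ∧ ChainConnIn X δ p a} := by
        intro a ha
        obtain ⟨p, hp, hchain⟩ := hcov a ha
        exact Set.mem_biUnion hp ⟨ha, hchain⟩
      exact (((s.finite_toSet).bddAbove_biUnion).2 (fun p hp => h p hp)).mono hsub
    obtain ⟨p, hp, hnb⟩ := key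
    refine ⟨p, fun t ht => ?_⟩
    rw [bddAbove_def] at hnb
    push_neg at hnb
    obtain ⟨a, ⟨haX, n, q, hq0, hqn, hqmem, hqstep⟩, hat⟩ := hnb t
    exact chain_cross n q hqmem hqstep (hq0 ▸ ht) (hqn ▸ hat)
  -- Step 2: build a quasi-Cauchy sequence near the grid √n tending to infinity
  set g : ℕ → ℝ := fun n => Real.sqrt n with hg
  have hsqrt : Tendsto Real.sqrt atTop atTop :=
    tendsto_atTop_atTop_of_monotone (fun a b h => Real.sqrt_le_sqrt h)
      (fun b => ⟨b^2, (Real.sqrt_sq_eq_abs b) ▸ le_abs_self b⟩)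
  have hgtop : Tendsto g atTop atTop := hsqrt.comp tendsto_natCast_atTop_atTop
  have hgdiff : Tendsto (fun n => g (n+1) - g n) atTop (𝓝 0) := by
    have heq : ∀ n : ℕ, g (n+1) - g n = 1 / (g (n+1) + g n) := by
      intro n
      have h1 : g (n+1) ≥ 1 := by
        rw [hg]
        simp only []
        calc (1:ℝ) = Real.sqrt 1 := (Real.sqrt_one).symm
          _ ≤ Real.sqrt ((n:ℕ)+1 : ℕ) := Real.sqrt_le_sqrt (by push_cast; linarith)
      have h2 : (0:ℝ) ≤ g n := Real.sqrt_nonneg _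
      have hpos : g (n+1) + g n > 0 := by linarith
      rw [eq_div_iff (ne_of_gt hpos)]
      have hkey : g (n+1) * g (n+1) - g n * g n = 1 := by
        have e1 : g (n+1) * g (n+1) = ((n:ℝ)+1) := by
          rw [hg]
          push_cast
          exact Real.mul_self_sqrt (by positivity)
        have e2 : g n * g n = (n:ℝ) := by
          rw [hg]
          exact Real.mul_self_sqrt (by positivity)
        rw [e1, e2]; ring
      nlinarith [hkey]
    rw [show (fun n => g (n+1) - g n) = fun n => 1 / (g (n+1) + g n) from funext heq]
    simp only [one_div]
    refine Tendsto.comp tendsto_inv_atTop_zero ?_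
    exact tendsto_atTop_mono
      (fun n => le_add_of_nonneg_left (Real.sqrt_nonneg _)) hgtop
  -- distances to the grid tend to zero
  have hinf : Tendsto (fun n => infDist (g n) X) atTop (𝓝 0) := by
    rw [Metric.tendsto_atTop]
    intro δ hδ
    obtain ⟨T, hT⟩ := step1 (δ/2) (by linarith)
    obtain ⟨N, hN⟩ := eventually_atTop.1 (hgtop.eventually_ge_atTop T)
    refine ⟨N, fun n hn => ?_⟩
    obtain ⟨x, hxX, hx⟩ := hT (g n) (hN n hn)
    rw [Real.dist_eq, sub_zero, abs_of_nonneg (infDist_nonneg)]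
    calc infDist (g n) X ≤ dist (g n) x := infDist_le_dist_of_mem hxX
      _ = dist x (g n) := dist_comm _ _
      _ < δ/2 := hx
      _ < δ := by linarith
  -- choose points of X near the grid
  have hex : ∀ n : ℕ, ∃ x ∈ X, dist (g n) x < infDist (g n) X + 1/(n+1) := by
    intro n
    apply (infDist_lt_iff hne).1
    have : (0:ℝ) < 1/(n+1) := by positivity
    linarith
  choose u huX hud using hex
  have hdz : Tendsto (fun n => dist (u n) (g n)) atTop (𝓝 0) := by
    apply squeeze_zero (fun n => dist_nonneg)
      (g := fun n => infDist (g n) X + 1/(n+1))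
      (fun n => by rw [dist_comm]; exact le_of_lt (hud n))
    have h2 : Tendsto (fun n : ℕ => 1/((n:ℝ)+1)) atTop (𝓝 0) := tendsto_one_div_add_atTop_nhds_zero_nat
    simpa using hinf.add h2
  -- u tends to infinity
  have hutop : Tendsto u atTop atTop := by
    apply tendsto_atTop_mono (f := fun n => g n - dist (u n) (g n))
    · intro n
      have : g n - u n ≤ |g n - u n| := le_abs_self _
      rw [← Real.dist_eq, dist_comm] at this
      linarith
    · have := hgtop.atTop_add (hdz.neg)
      simp only [← sub_eq_add_neg] at this
      exact this
  -- u is quasi-Cauchy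
  have hqc : QuasiCauchy u := by
    apply quasiCauchy_of_tendsto
    apply squeeze_zero (fun n => dist_nonneg)
      (g := fun n => dist (u (n+1)) (g (n+1)) + (g (n+1) - g n) + dist (g n) (u n))
    · intro n
      have h1 : dist (u (n+1)) (u n) ≤ dist (u (n+1)) (g (n+1)) + dist (g (n+1)) (g n)
          + dist (g n) (u n) := dist_triangle4 _ _ _ _
      have h2 : dist (g (n+1)) (g n) = g (n+1) - g n := by
        rw [Real.dist_eq, abs_of_nonneg]
        simp only [hg, sub_nonneg]
        exact Real.sqrt_le_sqrt (by push_cast; linarith)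
      linarith
    · have h1 : Tendsto (fun n => dist (u (n+1)) (g (n+1))) atTop (𝓝 0) :=
        hdz.comp (tendsto_add_atTop_nat 1)
      have h3 : Tendsto (fun n => dist (g n) (u n)) atTop (𝓝 0) := by
        simpa [dist_comm] using hdz
      simpa using (h1.add hgdiff).add h3
  -- contradiction: u has a cluster point but tends to infinity
  obtain ⟨c, _, hc⟩ := hQ u huX hqc
  have hle : map u atTop ≤ atTop := hutop
  have : 𝓝 c ⊓ map u atTop = ⊥ :=
    bot_unique (le_trans (inf_le_inf_left _ hle) (inf_nhds_atTop c).le)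
  exact hc.ne this

/-- transfer to the negated set for boundedness below -/
lemma aux_bddBelow (X : Set ℝ) (hB : BourbakiQuasiPrecompactRel X X)
    (hQ : ∀ u : ℕ → ℝ, (∀ n, u n ∈ X) → QuasiCauchy u →
      ∃ c ∈ X, MapClusterPt c atTop u) : BddBelow X := by
  rw [← bddAbove_neg]
  apply aux_bddAbove (-X)
  · intro ε hε
    obtain ⟨s, hsX, hcov⟩ := hB ε hε
    refine ⟨s.image (fun x => -x), ?_, ?_⟩
    · intro x hx
      simp only [Finset.coe_image, Set.mem_image] at hx
      obtain ⟨y, hy, rfl⟩ := hx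
      simpa using hsX hy
    · intro a ha
      obtain ⟨p, hp, n, q, hq0, hqn, hqmem, hqstep⟩ := hcov (-a) ha
      refine ⟨-p, Finset.mem_image.2 ⟨p, hp, rfl⟩, n, fun i => -(q i), by simp [hq0],
        by simp [hqn], fun i hi => by simpa using hqmem i hi,
        fun i hi => by simpa [dist_neg_neg] using hqstep i hi⟩
  · intro u hu hqc
    obtain ⟨c, hcX, hc⟩ := hQ (fun n => -(u n)) (fun n => by simpa using hu n)
      (fun ε hε => by
        obtain ⟨n₀, hn₀⟩ := hqc ε hε
        exact ⟨n₀, fun n hn => by simpa [dist_neg_neg] using hn₀ n hn⟩)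
    refine ⟨-c, by simpa using hcX, ?_⟩
    have h := hc.tendsto_comp (f := fun x : ℝ => -x) (y := -c)
      (continuous_neg.continuousAt)
    have heq : ((fun x : ℝ => -x) ∘ fun n => -u n) = u := funext fun n => neg_neg _
    rwa [heq] at h

theorem stmt5 (X : Set ℝ) :
    IsCompact X ↔
      (BourbakiQuasiPrecompactRel X X ∧
        ∀ u : ℕ → ℝ, (∀ n, u n ∈ X) → QuasiCauchy u →
          ∃ c ∈ X, MapClusterPt c atTop u) := by
  constructor
  · intro hX
    constructor
    · -- compact implies Bourbaki quasi-precompact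
      intro ε hε
      obtain ⟨t, htX, htfin, hcov⟩ := (totallyBounded_iff_subset.1 hX.totallyBounded)
        _ (dist_mem_uniformity hε)
      refine ⟨htfin.toFinset, by simpa using htX, fun a ha => ?_⟩
      obtain ⟨y, hy, hay⟩ := Set.mem_iUnion₂.1 (hcov ha)
      refine ⟨y, htfin.mem_toFinset.2 hy, 1, fun i => if i = 0 then y else a, by simp, by simp, ?_, ?_⟩
      · intro i hi
        by_cases h : i = 0
        · simpa [h] using htX hy
        · simpa [h] using ha
      · intro i hi
        interval_cases i
        simpa [dist_comm] using hay
    · -- compact implies cluster points exist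
      intro u hu _
      have : map u atTop ≤ 𝓟 X := le_principal_iff.2 (mem_map.2 (Eventually.of_forall hu))
      exact hX.exists_clusterPt this
  · rintro ⟨hB, hQ⟩
    rw [Metric.isCompact_iff_isClosed_bounded]
    constructor
    · -- closed
      apply IsSeqClosed.isClosed
      intro u p hu hup
      have hqc : QuasiCauchy u := by
        apply quasiCauchy_of_tendsto
        have := (hup.comp (tendsto_add_atTop_nat 1)).dist hup
        simpa using this
      obtain ⟨c, hcX, hc⟩ := hQ u hu hqc
      have : c = p := by
        have h1 : map u atTop ≤ 𝓝 p := hup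
        have h2 : ClusterPt c (𝓝 p) := hc.clusterPt.mono h1
        exact eq_of_nhds_neBot h2
      exact this ▸ hcX
    · -- bounded
      exact isBounded_iff_bddBelow_bddAbove.2 ⟨aux_bddBelow X hB hQ, aux_bddAbove X hB hQ⟩
end

section
/- Let 1 ≤ p < ∞ and let A be a bounded subset of ℓ^p with the p-norm. Then A is Bourbaki quasi-precompact in itself if and only if for each ε > 0 there exists n_0 ∈ ℕ such that for each x ∈ A there exists y = (y_i) ∈ A satisfying: x can be joined to y by an ε-chain in A, and Σ_{i > n_0} |y_i|^p < ε^p. -/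
open Filter Metric Set ENNReal

section chains
variable {α : Type*} [MetricSpace α] {B : Set α} {ε ε' : ℝ} {x y z : α}

theorem chain_symm (h : ChainConnIn B ε x y) : ChainConnIn B ε y x := by
  obtain ⟨n, q, h0, hn, hm, hd⟩ := h
  refine ⟨n, fun i => q (n - i), by simpa, by simpa [Nat.sub_self], fun i _ => hm _ (by omega),
    fun i hi => ?_⟩
  show dist (q (n - i)) (q (n - (i+1))) < ε
  have h1 : n - i = (n - (i+1)) + 1 := by omega
  rw [h1, dist_comm]
  exact hd _ (by omega)

theorem chain_mono (hε : ε ≤ ε') (h : ChainConnIn B ε x y) : ChainConnIn B ε' x y := by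
  obtain ⟨n, q, h0, hn, hm, hd⟩ := h
  exact ⟨n, q, h0, hn, hm, fun i hi => lt_of_lt_of_le (hd i hi) hε⟩

theorem chain_trans (h1 : ChainConnIn B ε x y) (h2 : ChainConnIn B ε y z) :
    ChainConnIn B ε x z := by
  obtain ⟨n, q, hq0, hqn, hqm, hqd⟩ := h1
  obtain ⟨m, r, hr0, hrm, hrm', hrd⟩ := h2
  refine ⟨n + m, fun i => if i < n then q i else r (i - n), ?_, ?_, ?_, ?_⟩
  · show (if 0 < n then q 0 else r (0 - n)) = x
    by_cases h : 0 < n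
    · simp [h, hq0]
    · have hn0 : n = 0 := by omega
      have hxy : x = y := by rw [← hq0, ← hqn, hn0]
      simp [h, hr0, ← hxy]
  · show (if n + m < n then q (n + m) else r (n + m - n)) = z
    have h : ¬ (n + m < n) := by omega
    simp [h, hrm]
  · intro i hi
    show (if i < n then q i else r (i - n)) ∈ B
    by_cases h : i < n
    · simpa [h] using hqm i (by omega)
    · simpa [h] using hrm' (i - n) (by omega)
  · intro i hi
    show dist (if i < n then q i else r (i - n)) (if i + 1 < n then q (i+1) else r (i + 1 - n)) < ε
    by_cases h : i < n
    · by_cases h' : i + 1 < n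
      · simpa [h, h'] using hqd i h
      · have hin : i + 1 = n := by omega
        have hr : r (i + 1 - n) = q (i+1) := by rw [hin, Nat.sub_self, hr0, ← hqn]
        rw [if_pos h, if_neg h', hr]
        exact hqd i h
    · have h' : ¬ (i + 1 < n) := by omega
      have hs : i + 1 - n = (i - n) + 1 := by omega
      rw [if_neg h, if_neg h', hs]
      exact hrd _ (by omega)

theorem chain_single (hx : x ∈ B) (hy : y ∈ B) (hd : dist x y < ε) : ChainConnIn B ε x y := by
  refine ⟨1, fun i => if i = 0 then x else y, by simp, by simp, ?_, ?_⟩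
  · intro i _
    by_cases h : i = 0 <;> simp [h, hx, hy]
  · intro i hi
    have h0 : i = 0 := by omega
    show dist (if i = 0 then x else y) (if i + 1 = 0 then x else y) < ε
    simp [h0, hd]

end chains

theorem hpt_pos (p : ℝ≥0∞) [Fact (1 ≤ p)] (hp : p ≠ ∞) : 0 < p.toReal := by
  have h1 := Fact.out (p := 1 ≤ p)
  exact ENNReal.toReal_pos (zero_lt_one.trans_le h1).ne' hp

theorem hpt_one (p : ℝ≥0∞) [Fact (1 ≤ p)] (hp : p ≠ ∞) : 1 ≤ p.toReal := by
  have := Fact.out (p := 1 ≤ p)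
  rw [← ENNReal.toReal_one]
  exact ENNReal.toReal_mono hp this

theorem memℓp_trunc (p : ℝ≥0∞) [Fact (1 ≤ p)] (hp : p ≠ ∞) (n : ℕ) (y : ∀ _ : ℕ, ℝ) :
    Memℓp (fun i => if i ≤ n then y i else 0) p := by
  apply memℓp_gen
  apply summable_of_ne_finset_zero (s := Finset.range (n+1))
  intro i hi
  have h : ¬ i ≤ n := by simpa [Nat.lt_succ_iff] using hi
  simp [h, Real.zero_rpow (ne_of_gt (hpt_pos p hp))]

noncomputable def truncLp (p : ℝ≥0∞) [Fact (1 ≤ p)] (hp : p ≠ ∞) (n : ℕ)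
    (y : lp (fun _ : ℕ => ℝ) p) : lp (fun _ : ℕ => ℝ) p :=
  ⟨fun i => if i ≤ n then y i else 0, memℓp_trunc p hp n y⟩

theorem tsum_tail_eq' (f : ℕ → ℝ) (n : ℕ) :
    ∑' i : {i : ℕ // n < i}, f i = ∑' k, f (k + (n + 1)) :=
  (Equiv.tsum_eq (⟨fun k => ⟨k + (n+1), by omega⟩, fun i => i.1 - (n+1),
      fun k => by simp, fun i => by ext; simp; omega⟩ : ℕ ≃ {i : ℕ // n < i})
    (fun i : {i : ℕ // n < i} => f i)).symm

theorem norm_tail_eq (p : ℝ≥0∞) [Fact (1 ≤ p)] (hp : p ≠ ∞) (n : ℕ)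
    (y : lp (fun _ : ℕ => ℝ) p) :
    ‖y - truncLp p hp n y‖ ^ p.toReal
      = ∑' i : {i : ℕ // n < i}, |(y : ∀ _ : ℕ, ℝ) i| ^ p.toReal := by
  rw [lp.norm_rpow_eq_tsum (hpt_pos p hp)]
  refine Eq.trans ?_ (tsum_subtype {i : ℕ | n < i} (fun i => |(y : ∀ _ : ℕ, ℝ) i| ^ p.toReal)).symm
  apply tsum_congr
  intro i
  have hc : (↑(y - truncLp p hp n y) : ∀ _ : ℕ, ℝ) i = y i - (if i ≤ n then y i else 0) := by
    rw [lp.coeFn_sub]; rfl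
  rw [hc, Set.indicator_apply]
  by_cases h : n < i
  · have h' : ¬ i ≤ n := by omega
    simp [h, h', Real.norm_eq_abs, Set.mem_setOf_eq]
  · have h' : i ≤ n := by omega
    simp [h, h', Real.zero_rpow (ne_of_gt (hpt_pos p hp)), Set.mem_setOf_eq]

theorem norm_head_eq (p : ℝ≥0∞) [Fact (1 ≤ p)] (hp : p ≠ ∞) (n : ℕ)
    (y y' : lp (fun _ : ℕ => ℝ) p) :
    ‖truncLp p hp n y - truncLp p hp n y'‖ ^ p.toReal
      = ∑ i ∈ Finset.range (n+1), |(y : ∀ _ : ℕ, ℝ) i - (y' : ∀ _ : ℕ, ℝ) i| ^ p.toReal := by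
  rw [lp.norm_rpow_eq_tsum (hpt_pos p hp)]
  rw [tsum_eq_sum (s := Finset.range (n+1)) ?_]
  · apply Finset.sum_congr rfl
    intro i hi
    have h : i ≤ n := by simpa [Nat.lt_succ_iff] using hi
    have hc : (↑(truncLp p hp n y - truncLp p hp n y') : ∀ _ : ℕ, ℝ) i
        = (if i ≤ n then (y : ∀ _ : ℕ, ℝ) i else 0)
          - (if i ≤ n then (y' : ∀ _ : ℕ, ℝ) i else 0) := by
      rw [lp.coeFn_sub]; rfl
    rw [hc]
    simp [h, Real.norm_eq_abs]
  · intro i hi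
    have h : ¬ i ≤ n := by simpa [Nat.lt_succ_iff] using hi
    have hc : (↑(truncLp p hp n y - truncLp p hp n y') : ∀ _ : ℕ, ℝ) i
        = (if i ≤ n then (y : ∀ _ : ℕ, ℝ) i else 0)
          - (if i ≤ n then (y' : ∀ _ : ℕ, ℝ) i else 0) := by
      rw [lp.coeFn_sub]; rfl
    rw [hc]
    simp [h, Real.zero_rpow (ne_of_gt (hpt_pos p hp))]

theorem rpow_lt_of_rpow_lt {a b c : ℝ} (hb : 0 ≤ b) (hc : 0 < c) (h : a ^ c < b ^ c) : a < b := by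
  by_contra hab
  push_neg at hab
  exact absurd (Real.rpow_le_rpow hb hab hc.le) (not_le.mpr h)

theorem stmt8 (p : ℝ≥0∞) [Fact (1 ≤ p)] (hp : p ≠ ∞)
    (A : Set (lp (fun _ : ℕ => ℝ) p)) (hA : Bornology.IsBounded A) :
    BourbakiQuasiPrecompactRel A A ↔
      ∀ ε > (0:ℝ), ∃ n₀ : ℕ, ∀ x ∈ A, ∃ y ∈ A, ChainConnIn A ε x y ∧
        ∑' i : {i : ℕ // n₀ < i}, |(y : ∀ _ : ℕ, ℝ) i| ^ p.toReal < ε ^ p.toReal := by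
  have hpt := hpt_pos p hp
  have hpt1 := hpt_one p hp
  have hp0 : p ≠ 0 := (zero_lt_one.trans_le (Fact.out (p := 1 ≤ p))).ne'
  constructor
  · -- forward
    intro h ε hε
    obtain ⟨s, hsA, hcov⟩ := h ε hε
    have hev : ∀ᶠ k in atTop, ∀ y ∈ s,
        (∑' j, |(y : ∀ _ : ℕ, ℝ) (j + k)| ^ p.toReal) < ε ^ p.toReal := by
      rw [Filter.eventually_all_finset]
      intro y hy
      exact (tendsto_sum_nat_add (fun i => |(y : ∀ _ : ℕ, ℝ) i| ^ p.toReal)).eventually_lt_const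
        (Real.rpow_pos_of_pos hε _)
    obtain ⟨N, hN⟩ := Filter.eventually_atTop.mp hev
    refine ⟨N, fun x hx => ?_⟩
    obtain ⟨a, has, hchain⟩ := hcov x hx
    refine ⟨a, hsA has, chain_symm hchain, ?_⟩
    exact (tsum_tail_eq' (fun j => |(a : ∀ _ : ℕ, ℝ) j| ^ p.toReal) N).trans_lt
      (hN (N+1) (by omega) a has)
  · -- backward
    intro h ε hε
    classical
    have hε4 : (0:ℝ) < ε/4 := by linarith
    obtain ⟨n₀, hn₀⟩ := h (ε/4) hε4
    set T : Set (lp (fun _ : ℕ => ℝ) p) :=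
      {y | y ∈ A ∧ ∑' i : {i : ℕ // n₀ < i}, |(y : ∀ _ : ℕ, ℝ) i| ^ p.toReal
          < (ε/4) ^ p.toReal} with hT
    obtain ⟨R, hR⟩ := (Metric.isBounded_iff_subset_closedBall 0).mp hA
    set R' := max R 0 with hR'
    set Φ : lp (fun _ : ℕ => ℝ) p → (Fin (n₀+1) → ℝ) :=
      fun y i => (y : ∀ _ : ℕ, ℝ) i with hΦ
    have hΦT : Φ '' T ⊆ closedBall 0 R' := by
      rintro _ ⟨y, hyT, rfl⟩
      rw [mem_closedBall, dist_zero_right]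
      refine (pi_norm_le_iff_of_nonneg (le_max_right R 0)).mpr fun i => ?_
      calc ‖Φ y i‖ ≤ ‖y‖ := lp.norm_apply_le_norm hp0 y i
        _ ≤ R := by have := hR hyT.1; rwa [mem_closedBall, dist_zero_right] at this
        _ ≤ R' := le_max_left _ _
    have hTB : TotallyBounded (Φ '' T) :=
      ((isCompact_closedBall (0 : Fin (n₀+1) → ℝ) R').totallyBounded).subset hΦT
    set δ := (ε/4) / (2 * ((n₀:ℝ)+1)) with hδ
    have hδpos : 0 < δ := by positivity
    obtain ⟨t, htfin, htcov⟩ := totallyBounded_iff.mp hTB δ hδpos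
    set good : (Fin (n₀+1) → ℝ) → Prop := fun c => ∃ y, y ∈ T ∧ Φ y ∈ ball c δ with hgoodd
    set g : (Fin (n₀+1) → ℝ) → lp (fun _ : ℕ => ℝ) p :=
      fun c => if hc : good c then hc.choose else 0 with hg
    have hgspec : ∀ c, good c → g c ∈ T ∧ Φ (g c) ∈ ball c δ := by
      intro c hc
      rw [hg]
      simp only [dif_pos hc]
      exact hc.choose_spec
    have hSfin : (g '' {c ∈ t | good c}).Finite := (htfin.subset (sep_subset _ _)).image g
    refine ⟨hSfin.toFinset, ?_, ?_⟩
    · intro w hw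
      rw [Finset.mem_coe, Set.Finite.mem_toFinset] at hw
      obtain ⟨c, hc, rfl⟩ := hw
      exact ((hgspec c hc.2).1).1
    · intro a ha
      obtain ⟨y, hyA, hchain, htail⟩ := hn₀ a ha
      have hyT : y ∈ T := ⟨hyA, htail⟩
      have hyc : Φ y ∈ ⋃ c ∈ t, ball c δ := htcov ⟨y, hyT, rfl⟩
      rw [Set.mem_iUnion₂] at hyc
      obtain ⟨c, hct, hyball⟩ := hyc
      have hcgood : good c := ⟨y, hyT, hyball⟩
      set w := g c with hw
      have hwspec := hgspec c hcgood
      have hwT : w ∈ T := hwspec.1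
      have hwA : w ∈ A := hwT.1
      refine ⟨w, ?_, ?_⟩
      · rw [Set.Finite.mem_toFinset]
        exact ⟨c, ⟨hct, hcgood⟩, rfl⟩
      · -- distance estimate : dist w y < ε
        have tailw : ‖w - truncLp p hp n₀ w‖ < ε/4 :=
          rpow_lt_of_rpow_lt hε4.le hpt (by rw [norm_tail_eq]; exact hwT.2)
        have taily : ‖y - truncLp p hp n₀ y‖ < ε/4 :=
          rpow_lt_of_rpow_lt hε4.le hpt (by rw [norm_tail_eq]; exact hyT.2)
        have headb : ‖truncLp p hp n₀ w - truncLp p hp n₀ y‖ ≤ ε/4 := by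
          have hcoord : ∀ i ∈ Finset.range (n₀+1),
              |(w : ∀ _ : ℕ, ℝ) i - (y : ∀ _ : ℕ, ℝ) i| ^ p.toReal
                ≤ ((ε/4)/((n₀:ℝ)+1)) ^ p.toReal := by
            intro i hi
            have hi' : i < n₀+1 := Finset.mem_range.mp hi
            have h1 : dist (Φ w ⟨i, hi'⟩) (Φ y ⟨i, hi'⟩) ≤ dist (Φ w) (Φ y) :=
              dist_le_pi_dist _ _ _
            have h2 : dist (Φ w) (Φ y) < 2*δ := by
              calc dist (Φ w) (Φ y) ≤ dist (Φ w) c + dist c (Φ y) := dist_triangle _ _ _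
                _ < δ + δ := add_lt_add hwspec.2 (by rw [dist_comm]; exact hyball)
                _ = 2*δ := by ring
            have hde : dist (Φ w ⟨i, hi'⟩) (Φ y ⟨i, hi'⟩)
                = |(w : ∀ _ : ℕ, ℝ) i - (y : ∀ _ : ℕ, ℝ) i| := by
              rw [Real.dist_eq]
            have h2δ : 2*δ = (ε/4)/((n₀:ℝ)+1) := by
              rw [hδ]; field_simp
            refine Real.rpow_le_rpow (abs_nonneg _) ?_ hpt.le
            rw [← hde]
            linarith [h1, h2, h2δ ▸ h2]
          have hsum : ‖truncLp p hp n₀ w - truncLp p hp n₀ y‖ ^ p.toReal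
              ≤ (ε/4) ^ p.toReal := by
            rw [norm_head_eq]
            calc ∑ i ∈ Finset.range (n₀+1),
                  |(w : ∀ _ : ℕ, ℝ) i - (y : ∀ _ : ℕ, ℝ) i| ^ p.toReal
                ≤ ∑ _i ∈ Finset.range (n₀+1), ((ε/4)/((n₀:ℝ)+1)) ^ p.toReal :=
                  Finset.sum_le_sum hcoord
              _ = ((n₀:ℝ)+1) * ((ε/4)/((n₀:ℝ)+1)) ^ p.toReal := by
                  rw [Finset.sum_const, Finset.card_range, nsmul_eq_mul]
                  push_cast; ring
              _ = ((n₀:ℝ)+1) * ((ε/4) ^ p.toReal / ((n₀:ℝ)+1) ^ p.toReal) := by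
                  rw [Real.div_rpow hε4.le (by positivity)]
              _ ≤ ((n₀:ℝ)+1) ^ p.toReal * ((ε/4) ^ p.toReal / ((n₀:ℝ)+1) ^ p.toReal) := by
                  refine mul_le_mul_of_nonneg_right ?_ (by positivity)
                  calc ((n₀:ℝ)+1) = ((n₀:ℝ)+1) ^ (1:ℝ) := (Real.rpow_one _).symm
                    _ ≤ ((n₀:ℝ)+1) ^ p.toReal :=
                      Real.rpow_le_rpow_of_exponent_le (by norm_num) hpt1
              _ = (ε/4) ^ p.toReal := by
                  field_simp
          by_contra hlt
          push_neg at hlt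
          exact absurd (Real.rpow_lt_rpow hε4.le hlt hpt) (not_lt.mpr hsum)
        have hwy : dist w y < ε := by
          calc dist w y ≤ dist w (truncLp p hp n₀ w) + dist (truncLp p hp n₀ w) (truncLp p hp n₀ y)
                + dist (truncLp p hp n₀ y) y := dist_triangle4 _ _ _ _
            _ = ‖w - truncLp p hp n₀ w‖ + ‖truncLp p hp n₀ w - truncLp p hp n₀ y‖
                + ‖y - truncLp p hp n₀ y‖ := by
                rw [dist_eq_norm, dist_eq_norm, dist_eq_norm, norm_sub_rev (truncLp p hp n₀ y) y]
            _ < ε/4 + ε/4 + ε/4 :=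
                add_lt_add (add_lt_add_of_lt_of_le tailw headb) taily
            _ < ε := by linarith
        exact chain_trans (chain_single hwA hyA hwy)
          (chain_mono (by linarith) (chain_symm hchain))
end

section
/- Let (X,d) and (Y,ρ) be metric spaces. Then: (1) every Lipschitz in the small function f : X → Y is quasi-Cauchy Lipschitz; (2) every quasi-Cauchy Lipschitz function f : X → Y is Cauchy-Lipschitz. -/
open Filter Metric Set NNReal

/-- `f` is Lipschitz in the small. -/
def LipschitzInTheSmall {α β : Type*} [MetricSpace α] [MetricSpace β] (f : α → β) : Prop :=
  ∃ δ > (0:ℝ), ∃ K > (0:ℝ), ∀ x y : α, dist x y < δ → dist (f x) (f y) ≤ K * dist x y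

/-- `f` is quasi-Cauchy Lipschitz: along each quasi-Cauchy sequence, consecutive
terms satisfy a uniform Lipschitz estimate. -/
def QuasiCauchyLipschitz {α β : Type*} [MetricSpace α] [MetricSpace β] (f : α → β) : Prop :=
  ∀ u : ℕ → α, QuasiCauchy u → ∃ L > (0:ℝ),
    ∀ k : ℕ, dist (f (u k)) (f (u (k+1))) ≤ L * dist (u k) (u (k+1))

/-- `f` is Cauchy-Lipschitz: it is Lipschitz on the range of each Cauchy sequence. -/
def CauchyLipschitz {α β : Type*} [MetricSpace α] [MetricSpace β] (f : α → β) : Prop :=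
  ∀ u : ℕ → α, CauchySeq u → ∃ K : ℝ≥0, LipschitzOnWith K f (Set.range u)

/-- Interleaving of two sequences. -/
def pairSeq {X : Type*} (x y : ℕ → X) : ℕ → X :=
  fun n => if n % 2 = 0 then x (n / 2) else y (n / 2)

lemma pairSeq_even {X : Type*} (x y : ℕ → X) (k : ℕ) : pairSeq x y (2 * k) = x k := by
  simp [pairSeq, Nat.mul_div_cancel_left]

lemma pairSeq_odd {X : Type*} (x y : ℕ → X) (k : ℕ) : pairSeq x y (2 * k + 1) = y k := by
  have h1 : (2 * k + 1) % 2 = 1 := by omega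
  have h2 : (2 * k + 1) / 2 = k := by omega
  simp [pairSeq, h1, h2]

lemma quasiCauchy_pairSeq {X : Type*} [MetricSpace X] (x y : ℕ → X)
    (h1 : ∀ ε > (0:ℝ), ∃ N, ∀ n ≥ N, dist (x n) (y n) < ε)
    (h2 : ∀ ε > (0:ℝ), ∃ N, ∀ n ≥ N, dist (y n) (x (n + 1)) < ε) :
    QuasiCauchy (pairSeq x y) := by
  intro ε hε
  obtain ⟨N1, hN1⟩ := h1 ε hε
  obtain ⟨N2, hN2⟩ := h2 ε hε
  refine ⟨2 * (max N1 N2), fun n hn => ?_⟩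
  rcases Nat.even_or_odd n with ⟨k, hk⟩ | ⟨k, hk⟩
  · have hk' : n = 2 * k := by omega
    subst hk'
    rw [pairSeq_odd, pairSeq_even, dist_comm]
    exact hN1 k (by omega)
  · have hk' : n = 2 * k + 1 := by omega
    subst hk'
    rw [show 2 * k + 1 + 1 = 2 * (k + 1) from by ring, pairSeq_even, pairSeq_odd, dist_comm]
    exact hN2 k (by omega)

lemma cauchySeq_comp_of_qcl {X Y : Type*} [MetricSpace X] [MetricSpace Y] {f : X → Y}
    (hf : QuasiCauchyLipschitz f) {u : ℕ → X} (hu : CauchySeq u) :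
    CauchySeq (fun n => f (u n)) := by
  rw [Metric.cauchySeq_iff] at hu ⊢
  by_contra hc
  push_neg at hc
  obtain ⟨ε, hε, hc⟩ := hc
  choose p hp q hq hd using hc
  have hqc : QuasiCauchy (pairSeq (fun n => u (p n)) (fun n => u (q n))) := by
    apply quasiCauchy_pairSeq
    · intro δ hδ
      obtain ⟨N, hN⟩ := hu δ hδ
      exact ⟨N, fun n hn => hN _ (le_trans hn (hp n)) _ (le_trans hn (hq n))⟩
    · intro δ hδ
      obtain ⟨N, hN⟩ := hu δ hδ
      exact ⟨N, fun n hn => hN _ (le_trans hn (hq n)) _ (le_trans (by omega) (hp (n+1)))⟩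
  obtain ⟨L, hL, hLip⟩ := hf _ hqc
  obtain ⟨N, hN⟩ := hu (ε / L) (div_pos hε hL)
  have h1 := hLip (2 * N)
  rw [pairSeq_even, pairSeq_odd] at h1
  have h2 : dist (u (p N)) (u (q N)) < ε / L := hN _ (hp N) _ (hq N)
  have h0 : ε ≤ dist (f (u (p N))) (f (u (q N))) := hd N
  have h3 : L * dist (u (p N)) (u (q N)) < L * (ε / L) :=
    mul_lt_mul_of_pos_left h2 hL
  rw [mul_div_cancel₀ _ (ne_of_gt hL)] at h3
  linarith

theorem stmt16 {X Y : Type*} [MetricSpace X] [MetricSpace Y] :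
    (∀ f : X → Y, LipschitzInTheSmall f → QuasiCauchyLipschitz f) ∧
    (∀ f : X → Y, QuasiCauchyLipschitz f → CauchyLipschitz f) := by
  constructor
  · -- Lipschitz in the small → quasi-Cauchy Lipschitz
    intro f hf u hu
    obtain ⟨δ, hδ, K, hK, hfK⟩ := hf
    obtain ⟨n₀, hn₀⟩ := hu δ hδ
    have hcnn : ∀ k : ℕ, 0 ≤ dist (f (u k)) (f (u (k+1))) / dist (u k) (u (k+1)) :=
      fun k => div_nonneg dist_nonneg dist_nonneg
    refine ⟨K + ∑ m ∈ Finset.range n₀, dist (f (u m)) (f (u (m+1))) / dist (u m) (u (m+1)),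
      add_pos_of_pos_of_nonneg hK (Finset.sum_nonneg fun m _ => hcnn m), fun k => ?_⟩
    rcases lt_or_ge k n₀ with hk | hk
    · by_cases hd : dist (u k) (u (k+1)) = 0
      · have he : u k = u (k+1) := dist_eq_zero.mp hd
        rw [hd, mul_zero, he, dist_self]
      · have hd' : 0 < dist (u k) (u (k+1)) := lt_of_le_of_ne dist_nonneg (Ne.symm hd)
        have heq : dist (f (u k)) (f (u (k+1))) =
            (dist (f (u k)) (f (u (k+1))) / dist (u k) (u (k+1))) * dist (u k) (u (k+1)) :=
          (div_mul_cancel₀ _ hd).symm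
        rw [heq]
        apply mul_le_mul_of_nonneg_right _ dist_nonneg
        calc dist (f (u k)) (f (u (k+1))) / dist (u k) (u (k+1))
            ≤ ∑ m ∈ Finset.range n₀, dist (f (u m)) (f (u (m+1))) / dist (u m) (u (m+1)) :=
              Finset.single_le_sum (fun m _ => hcnn m) (Finset.mem_range.mpr hk)
          _ ≤ _ := le_add_of_nonneg_left hK.le
    · have h1 : dist (u k) (u (k+1)) < δ := by rw [dist_comm]; exact hn₀ k hk
      calc dist (f (u k)) (f (u (k+1))) ≤ K * dist (u k) (u (k+1)) := hfK _ _ h1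
        _ ≤ _ := mul_le_mul_of_nonneg_right
            (le_add_of_nonneg_right (Finset.sum_nonneg fun m _ => hcnn m)) dist_nonneg
  · -- quasi-Cauchy Lipschitz → Cauchy-Lipschitz
    intro f hf u hu
    by_contra hcon
    unfold CauchyLipschitz at hcon
    push_neg at hcon
    have H : ∀ n : ℕ, ∃ a b : ℕ, (n : ℝ) * dist (u a) (u b) < dist (f (u a)) (f (u b)) := by
      intro n
      by_contra hno
      push_neg at hno
      refine hcon (n : ℝ≥0) ?_
      rw [lipschitzOnWith_iff_dist_le_mul]
      rintro x ⟨a, rfl⟩ y ⟨b, rfl⟩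
      have := hno a b
      simpa using this
    choose i j hP using H
    obtain ⟨C, hCpos, hCb⟩ := cauchySeq_bdd (cauchySeq_comp_of_qcl hf hu)
    have hdpos : ∀ n, 0 < dist (u (i n)) (u (j n)) := by
      intro n
      rcases (dist_nonneg : (0:ℝ) ≤ dist (u (i n)) (u (j n))).lt_or_eq with h | h
      · exact h
      · exfalso
        have he : u (i n) = u (j n) := dist_eq_zero.mp h.symm
        have hp := hP n
        rw [he] at hp
        simp [dist_self] at hp
    have hdC : ∀ n : ℕ, (n : ℝ) * dist (u (i n)) (u (j n)) < C :=
      fun n => lt_trans (hP n) (hCb (i n) (j n))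
    have hdsmall : ∀ ε > (0:ℝ), ∃ N, ∀ n ≥ N, dist (u (i n)) (u (j n)) < ε := by
      intro ε hε
      refine ⟨⌈C / ε⌉₊ + 1, fun n hn => ?_⟩
      have hn1 : (0:ℝ) < n := by
        have : 1 ≤ n := by omega
        exact_mod_cast Nat.lt_of_lt_of_le Nat.zero_lt_one this
      have h2 : C / ε < (n : ℝ) := by
        have hlt : (⌈C / ε⌉₊ : ℝ) < n := by exact_mod_cast (by omega : ⌈C / ε⌉₊ < n)
        exact lt_of_le_of_lt (Nat.le_ceil _) hlt
      have h3 : dist (u (i n)) (u (j n)) < C / n :=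
        (lt_div_iff₀ hn1).mpr (by rw [mul_comm]; exact hdC n)
      have h4 : C / (n : ℝ) < ε :=
        (div_lt_iff₀ hn1).mpr (by linarith [(div_lt_iff₀ hε).mp h2])
      linarith
    have hkey : ∀ N : ℕ, ∃ n₀ : ℕ, ∀ n ≥ n₀, N ≤ i n ∨ N ≤ j n := by
      intro N
      refine ⟨((Finset.range N ×ˢ Finset.range N).sup
        fun p => ⌈C / dist (u p.1) (u p.2)⌉₊) + 1, fun n hn => ?_⟩
      by_contra hno
      push_neg at hno
      obtain ⟨hiN, hjN⟩ := hno
      have hd0 := hdpos n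
      have h1 : (n : ℝ) < C / dist (u (i n)) (u (j n)) := (lt_div_iff₀ hd0).mpr (hdC n)
      have h2 : n ≤ ⌈C / dist (u (i n)) (u (j n))⌉₊ := by
        have hle := Nat.le_ceil (C / dist (u (i n)) (u (j n)))
        exact_mod_cast le_trans h1.le hle
      have hmem : (i n, j n) ∈ Finset.range N ×ˢ Finset.range N := by
        simp [Finset.mem_product, hiN, hjN]
      have h3 := Finset.le_sup (f := fun p : ℕ × ℕ => ⌈C / dist (u p.1) (u p.2)⌉₊) hmem
      simp only at h3
      omega
    have hqc : QuasiCauchy (pairSeq (fun n => u (i n)) (fun n => u (j n))) := by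
      apply quasiCauchy_pairSeq
      · intro ε hε
        exact hdsmall ε hε
      · intro ε hε
        obtain ⟨N, hN⟩ := Metric.cauchySeq_iff.mp hu (ε/4) (by linarith)
        obtain ⟨n₀, hn₀⟩ := hkey N
        obtain ⟨n₁, hn₁⟩ := hdsmall (ε/4) (by linarith)
        refine ⟨max n₀ n₁, fun n hn => ?_⟩
        have e1 : ∃ m, N ≤ m ∧ dist (u (j n)) (u m) ≤ dist (u (i n)) (u (j n)) := by
          rcases hn₀ n (le_trans (le_max_left _ _) hn) with h | h
          · exact ⟨i n, h, le_of_eq (dist_comm _ _)⟩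
          · exact ⟨j n, h, by rw [dist_self]; exact dist_nonneg⟩
        have e2 : ∃ m, N ≤ m ∧ dist (u m) (u (i (n+1))) ≤ dist (u (i (n+1))) (u (j (n+1))) := by
          rcases hn₀ (n+1) (le_trans (le_max_left _ _) (le_trans hn (Nat.le_succ n))) with h | h
          · exact ⟨i (n+1), h, by rw [dist_self]; exact dist_nonneg⟩
          · exact ⟨j (n+1), h, le_of_eq (dist_comm _ _)⟩
        obtain ⟨m, hm, hm2⟩ := e1
        obtain ⟨m', hm', hm'2⟩ := e2
        have t1 : dist (u (i n)) (u (j n)) < ε/4 := hn₁ n (le_trans (le_max_right _ _) hn)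
        have t2 : dist (u (i (n+1))) (u (j (n+1))) < ε/4 := hn₁ (n+1) (le_trans (le_max_right _ _) (le_trans hn (Nat.le_succ n)))
        have t3 : dist (u m) (u m') < ε/4 := hN m hm m' hm'
        calc dist (u (j n)) (u (i (n+1)))
            ≤ dist (u (j n)) (u m) + dist (u m) (u m') + dist (u m') (u (i (n+1))) :=
              dist_triangle4 _ _ _ _
          _ < ε := by linarith
    obtain ⟨L, hL, hLip⟩ := hf _ hqc
    have hfin := hLip (2 * (⌈L⌉₊ + 1))
    rw [pairSeq_even, pairSeq_odd] at hfin
    have h1 := hP (⌈L⌉₊ + 1)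
    have hd0 := hdpos (⌈L⌉₊ + 1)
    have hnL : ((⌈L⌉₊ + 1 : ℕ) : ℝ) < L :=
      (mul_lt_mul_iff_left₀ hd0).mp (lt_of_lt_of_le h1 hfin)
    have hLn : L < ((⌈L⌉₊ + 1 : ℕ) : ℝ) := by
      have := Nat.le_ceil L
      push_cast
      linarith
    linarith
end
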